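/- Let W be a finite set of vectors in ℝ^{d+1} such that every w ∈ W has nonnegative last coordinate w_{d+1} ≥ 0, and let C = cone(W). Then the intersection of C with the hyperplane H_{d+1} = {x ∈ ℝ^{d+1} : x_{d+1} = 1} satisfies C ∩ H_{d+1} = conv(Ŷ) + cone(V̂), where Ŷ = {w / w_{d+1} : w ∈ W, w_{d+1} > 0} and V̂ = {w ∈ W : w_{d+1} = 0}. In particular, C ∩ H_{d+1} is a V-polyhedron in H_{d+1}. -/
import Mathlib


open RealInnerProductSpace Pointwise

/-- The cone (set of nonnegative linear combinations) of a finite set `W` of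
vectors. -/
def coneOfFinset {m : ℕ} (W : Finset (EuclideanSpace ℝ (Fin m))) :
    Set (EuclideanSpace ℝ (Fin m)) :=
  {x | ∃ μ : EuclideanSpace ℝ (Fin m) → ℝ, (∀ w, 0 ≤ μ w) ∧ x = ∑ w ∈ W, μ w • w}

private lemma coneOfFinset_convex {m : ℕ} (W : Finset (EuclideanSpace ℝ (Fin m))) :
    Convex ℝ (coneOfFinset W) := by
  rintro x ⟨μ, hμ, rfl⟩ y ⟨ν, hν, rfl⟩ a b ha hb hab
  refine ⟨fun w => a * μ w + b * ν w, fun w => add_nonneg (mul_nonneg ha (hμ w)) (mul_nonneg hb (hν w)), ?_⟩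
  rw [Finset.smul_sum, Finset.smul_sum, ← Finset.sum_add_distrib]
  exact Finset.sum_congr rfl fun w _ => by rw [add_smul, smul_smul, smul_smul]

private lemma coneOfFinset_add {m : ℕ} (W : Finset (EuclideanSpace ℝ (Fin m)))
    {x y : EuclideanSpace ℝ (Fin m)}
    (hx : x ∈ coneOfFinset W) (hy : y ∈ coneOfFinset W) : x + y ∈ coneOfFinset W := by
  obtain ⟨μ, hμ, rfl⟩ := hx
  obtain ⟨ν, hν, rfl⟩ := hy
  refine ⟨fun w => μ w + ν w, fun w => add_nonneg (hμ w) (hν w), ?_⟩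
  rw [← Finset.sum_add_distrib]
  exact Finset.sum_congr rfl fun w _ => (add_smul _ _ _).symm

/-- (Cone–polyhedron correspondence.) If every vector of the finite set
`W ⊆ ℝ^{d+1}` has nonnegative last coordinate, then the intersection of
`C = cone(W)` with the hyperplane `x_{d+1} = 1` equals `conv(Ŷ) + cone(V̂)`,
where `Ŷ = {w / w_{d+1} : w ∈ W, w_{d+1} > 0}` and
`V̂ = {w ∈ W : w_{d+1} = 0}`; in particular it is a `V`-polyhedron. -/
theorem cone_inter_hyperplane_eq (d : ℕ)
    (W : Finset (EuclideanSpace ℝ (Fin (d + 1))))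
    (hW : ∀ w ∈ W, 0 ≤ w (Fin.last d)) :
    coneOfFinset W ∩ {x : EuclideanSpace ℝ (Fin (d + 1)) | x (Fin.last d) = 1} =
      convexHull ℝ
        ((fun w : EuclideanSpace ℝ (Fin (d + 1)) => (w (Fin.last d))⁻¹ • w) ''
          {w | w ∈ W ∧ 0 < w (Fin.last d)}) +
      coneOfFinset (W.filter (fun w => w (Fin.last d) = 0)) := by
  classical
  set i := Fin.last d with hi
  set L : EuclideanSpace ℝ (Fin (d + 1)) →ₗ[ℝ] ℝ := EuclideanSpace.projₗ i with hL
  have hLapp : ∀ x : EuclideanSpace ℝ (Fin (d + 1)), L x = x i := fun x => rfl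
  set Yhat := ((fun w : EuclideanSpace ℝ (Fin (d + 1)) => (w i)⁻¹ • w) ''
    {w | w ∈ W ∧ 0 < w i}) with hYhat
  set Z := W.filter (fun w => w i = 0) with hZ
  ext x
  constructor
  · rintro ⟨⟨μ, hμ, hx⟩, hx1⟩
    have hx1 : x i = 1 := hx1
    set P := W.filter (fun w => 0 < w i) with hP
    -- split the sum
    have hfil : W.filter (fun w => ¬ 0 < w i) = Z := by
      rw [hZ]
      apply Finset.filter_congr
      intro w hw
      simp only [not_lt]
      constructor
      · intro h; exact le_antisymm h (hW w hw)
      · intro h; exact le_of_eq h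
    have hsplit : x = (∑ w ∈ P, μ w • w) + ∑ w ∈ Z, μ w • w := by
      rw [hx, ← Finset.sum_filter_add_sum_filter_not W (fun w => 0 < w i), hfil]
    -- last coordinate
    have hsum1 : ∑ w ∈ P, μ w * w i = 1 := by
      have : L x = ∑ w ∈ P, μ w * w i + ∑ w ∈ Z, μ w * w i := by
        rw [hsplit]
        simp only [map_add, map_sum, map_smul, smul_eq_mul]
        rfl
      have hz0 : ∑ w ∈ Z, μ w * w i = 0 := by
        apply Finset.sum_eq_zero
        intro w hw
        rw [hZ, Finset.mem_filter] at hw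
        rw [hw.2, mul_zero]
      rw [hLapp, hx1, hz0, add_zero] at this
      exact this.symm
    refine ⟨∑ w ∈ P, μ w • w, ?_, ∑ w ∈ Z, μ w • w, ?_, hsplit.symm⟩
    · -- convex hull membership
      have heq : (∑ w ∈ P, μ w • w) =
          P.centerMass (fun w => μ w * w i) (fun w => (w i)⁻¹ • w) := by
        rw [Finset.centerMass_eq_of_sum_1 _ _ hsum1]
        apply Finset.sum_congr rfl
        intro w hw
        rw [hP, Finset.mem_filter] at hw
        rw [smul_smul, mul_assoc, mul_inv_cancel₀ hw.2.ne', mul_one]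
      rw [heq]
      apply Finset.centerMass_mem_convexHull
      · intro w hw
        rw [hP, Finset.mem_filter] at hw
        exact mul_nonneg (hμ w) hw.2.le
      · rw [hsum1]; exact one_pos
      · intro w hw
        rw [hP, Finset.mem_filter] at hw
        exact ⟨w, ⟨hw.1, hw.2⟩, rfl⟩
    · exact ⟨μ, hμ, rfl⟩
  · rintro ⟨y, hy, v, hv, rfl⟩
    have hYsub : Yhat ⊆ coneOfFinset W ∩ {x | x i = 1} := by
      rintro _ ⟨w, ⟨hwW, hwpos⟩, rfl⟩
      constructor
      · refine ⟨fun u => if u = w then (w i)⁻¹ else 0, ?_, ?_⟩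
        · intro u
          dsimp only
          split
          · exact inv_nonneg.mpr hwpos.le
          · exact le_refl 0
        · rw [Finset.sum_eq_single w]
          · simp
          · intro u _ hu; simp [hu]
          · intro h; exact absurd hwW h
      · show ((w i)⁻¹ • w) i = 1
        have : ((w i)⁻¹ • w) i = (w i)⁻¹ * w i := rfl
        rw [this, inv_mul_cancel₀ hwpos.ne']
    have hconv : Convex ℝ (coneOfFinset W ∩ {x : EuclideanSpace ℝ (Fin (d + 1)) | x i = 1}) := by
      apply (coneOfFinset_convex W).inter
      have : {x : EuclideanSpace ℝ (Fin (d + 1)) | x i = 1} = {x | L x = 1} := rfl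
      rw [this]
      exact convex_hyperplane L.isLinear 1
    have hy' : y ∈ coneOfFinset W ∩ {x | x i = 1} :=
      convexHull_min hYsub hconv hy
    obtain ⟨ν, hν, hveq⟩ := hv
    have hvW : v ∈ coneOfFinset W := by
      refine ⟨fun u => if u i = 0 then ν u else 0, ?_, ?_⟩
      · intro u; dsimp only; split
        · exact hν u
        · exact le_refl 0
      · rw [hveq, hZ, Finset.sum_filter]
        apply Finset.sum_congr rfl
        intro u _
        by_cases h : u i = 0 <;> simp [h]
    have hvi : v i = 0 := by
      have : L v = 0 := by
        rw [hveq]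
        simp only [map_sum, map_smul, smul_eq_mul]
        apply Finset.sum_eq_zero
        intro w hw
        rw [hZ, Finset.mem_filter] at hw
        rw [hLapp, hw.2, mul_zero]
      exact this
    refine ⟨coneOfFinset_add W hy'.1 hvW, ?_⟩
    show (y + v) i = 1
    have : (y + v) i = y i + v i := rfl
    rw [this, hy'.2, hvi, add_zero]
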